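/- arXiv:1104.4220 — 3 statements merged into one kernel-verified Lean document; each statement's English description precedes it below -/
import Mathlib

section
/- Let K = [0, 1] × [0, 1] ⊆ ℝ² be the unit square. Then the skeleton of K equals the union of the two open diagonals: S_K = {(x, x) : 0 < x < 1} ∪ {(x, 1 − x) : 0 < x < 1}. That is, a point z ∈ ℝ² has a non-unique nearest point on ∂K (with respect to the Euclidean distance) if and only if z lies on one of the two open diagonals of the square. -/
open Metric Set

/-! Outside the interior of a convex set `K` in a strictly convex space the nearest point of `∂K`
is unique: the midpoint of two nearest points lies in `closure K` and is strictly closer, and the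
segment to it crosses `∂K` even closer. Inside the unit square the distance to `∂K` is the
distance to the nearest side, attained only at the foot of the perpendicular on that side, so two
nearest points mean that two sides are nearest at once, which happens exactly on the diagonals. -/

def skeleton {X : Type*} [MetricSpace X] (K : Set X) : Set X :=
  {z | ∃ x x' : X, x ∈ frontier K ∧ x' ∈ frontier K ∧ x ≠ x' ∧
    dist z x = infDist z (frontier K) ∧ dist z x' = infDist z (frontier K)}

section

variable {E : Type*} [NormedAddCommGroup E] [NormedSpace ℝ E]

theorem exists_mem_frontier_dist_le {K : Set E} {z y : E} (hz : z ∉ K) (hy : y ∈ K) :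
    ∃ w ∈ frontier K, dist z w ≤ dist z y := by
  by_contra! h
  have hseg : segment ℝ z y ⊆ interior K ∪ interior Kᶜ := fun w hw => by
    rw [← compl_frontier_eq_union_interior]
    exact fun hwK => (h w hwK).not_ge
      (by simpa [dist_comm] using segment_subset_closedBall_left z y hw)
  have hdisj : Disjoint (interior K) (interior Kᶜ) :=
    disjoint_compl_right.mono interior_subset interior_subset
  rcases (convex_segment z y).isPreconnected.subset_or_subset isOpen_interior isOpen_interior
    hdisj hseg with hK | hKc
  · exact hz (interior_subset (hK (left_mem_segment ℝ z y)))
  · exact interior_subset (hKc (right_mem_segment ℝ z y)) hy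

variable [StrictConvexSpace ℝ E]

theorem Convex.skeleton_subset_interior {K : Set E} (hK : Convex ℝ K) :
    skeleton K ⊆ interior K := by
  rintro z ⟨x, x', hx, hx', hne, hzx, hzx'⟩
  by_contra hz
  by_cases hzK : z ∈ closure K
  · rw [infDist_zero_of_mem (show z ∈ frontier K from ⟨hzK, hz⟩), dist_eq_zero] at hzx hzx'
    exact hne (hzx.symm.trans hzx')
  have hmid : midpoint ℝ x x' ∈ closure K :=
    hK.closure.midpoint_mem (frontier_subset_closure hx) (frontier_subset_closure hx')
  have hlt : dist z (midpoint ℝ x x') < infDist z (frontier K) := by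
    have := (sbtw_midpoint_of_ne ℝ hne).dist_lt_max_dist z
    rwa [dist_comm x, dist_comm x', hzx, hzx', max_self, dist_comm] at this
  obtain ⟨w, hw, hzw⟩ := exists_mem_frontier_dist_le hzK hmid
  exact (infDist_le_dist_of_mem (frontier_closure_subset hw)).not_gt (hzw.trans_lt hlt)

end

local notation "ℝ²" => EuclideanSpace ℝ (Fin 2)

def unitSquare : Set ℝ² := {z | z 0 ∈ Icc (0 : ℝ) 1 ∧ z 1 ∈ Icc (0 : ℝ) 1}

theorem convex_unitSquare : Convex ℝ unitSquare :=
  ((convex_Icc 0 1).linear_preimage (EuclideanSpace.proj 0 : ℝ² →L[ℝ] ℝ).toLinearMap).inter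
    ((convex_Icc 0 1).linear_preimage (EuclideanSpace.proj 1 : ℝ² →L[ℝ] ℝ).toLinearMap)

theorem isClosed_unitSquare : IsClosed unitSquare :=
  (isClosed_Icc.preimage (PiLp.continuous_apply 2 _ 0)).inter
    (isClosed_Icc.preimage (PiLp.continuous_apply 2 _ 1))

theorem interior_unitSquare :
    interior unitSquare = {z : ℝ² | z 0 ∈ Ioo (0 : ℝ) 1 ∧ z 1 ∈ Ioo (0 : ℝ) 1} := by
  have h (i : Fin 2) : interior ((fun z : ℝ² => z i) ⁻¹' Icc 0 1) = (fun z => z i) ⁻¹' Ioo 0 1 := by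
    rw [← (PiLp.isOpenMap_apply 2 _ i).preimage_interior_eq_interior_preimage
      (PiLp.continuous_apply 2 _ i), interior_Icc]
  exact interior_inter.trans (congrArg₂ (· ∩ ·) (h 0) (h 1))

theorem mem_frontier_unitSquare {z : ℝ²} :
    z ∈ frontier unitSquare ↔ z ∈ unitSquare ∧ (z 0 = 0 ∨ z 0 = 1 ∨ z 1 = 0 ∨ z 1 = 1) := by
  rw [frontier, isClosed_unitSquare.closure_eq, interior_unitSquare]
  simp only [unitSquare, mem_sdiff, mem_ofPred_eq, mem_Icc, mem_Ioo]
  grind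

theorem dist_sq_eq_fin_two (z w : ℝ²) : dist z w ^ 2 = (z 0 - w 0) ^ 2 + (z 1 - w 1) ^ 2 := by
  rw [EuclideanSpace.dist_eq, Real.sq_sqrt (by positivity), Fin.sum_univ_two, Real.dist_eq,
    Real.dist_eq, sq_abs, sq_abs]

theorem dist_eq_abs_sub_apply_zero_iff {z w : ℝ²} : dist z w = |z 0 - w 0| ↔ z 1 = w 1 := by
  rw [← sq_eq_sq₀ dist_nonneg (abs_nonneg _), dist_sq_eq_fin_two, sq_abs, add_eq_left,
    sq_eq_zero_iff, sub_eq_zero]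

theorem dist_eq_abs_sub_apply_one_iff {z w : ℝ²} : dist z w = |z 1 - w 1| ↔ z 0 = w 0 := by
  rw [← sq_eq_sq₀ dist_nonneg (abs_nonneg _), dist_sq_eq_fin_two, sq_abs, add_eq_right,
    sq_eq_zero_iff, sub_eq_zero]

theorem dist_foot_vertical (z : ℝ²) (a : ℝ) : dist z !₂[a, z 1] = |z 0 - a| := by
  rw [dist_eq_abs_sub_apply_zero_iff.2 (by simp)]; simp

theorem dist_foot_horizontal (z : ℝ²) (b : ℝ) : dist z !₂[z 0, b] = |z 1 - b| := by
  rw [dist_eq_abs_sub_apply_one_iff.2 (by simp)]; simp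

theorem foot_vertical_mem_frontier {a b : ℝ} (ha : a = 0 ∨ a = 1) (hb : b ∈ Icc (0 : ℝ) 1) :
    !₂[a, b] ∈ frontier unitSquare :=
  mem_frontier_unitSquare.2
    ⟨⟨by rcases ha with rfl | rfl <;> simp, by simpa⟩, by simpa using ha.imp_right Or.inl⟩

theorem foot_horizontal_mem_frontier {a b : ℝ} (ha : a ∈ Icc (0 : ℝ) 1) (hb : b = 0 ∨ b = 1) :
    !₂[a, b] ∈ frontier unitSquare :=
  mem_frontier_unitSquare.2
    ⟨⟨by simpa, by rcases hb with rfl | rfl <;> simp⟩, by simp [hb]⟩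

def distToSides (z : ℝ²) : ℝ := min (min (z 0) (1 - z 0)) (min (z 1) (1 - z 1))

theorem distToSides_le (z : ℝ²) :
    distToSides z ≤ z 0 ∧ distToSides z ≤ 1 - z 0 ∧
      distToSides z ≤ z 1 ∧ distToSides z ≤ 1 - z 1 :=
  ⟨(min_le_left _ _).trans (min_le_left _ _), (min_le_left _ _).trans (min_le_right _ _),
    (min_le_right _ _).trans (min_le_left _ _), (min_le_right _ _).trans (min_le_right _ _)⟩

theorem distToSides_le_dist (z : ℝ²) {w : ℝ²} (hw : w ∈ frontier unitSquare) :
    distToSides z ≤ dist z w := by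
  have h0 : |z 0 - w 0| ≤ dist z w := PiLp.dist_apply_le z w 0
  have h1 : |z 1 - w 1| ≤ dist z w := PiLp.dist_apply_le z w 1
  obtain ⟨-, hside⟩ := mem_frontier_unitSquare.1 hw
  have := distToSides_le z
  rcases hside with h | h | h | h <;>
    linarith [le_abs_self (z 0 - w 0), neg_abs_le (z 0 - w 0), le_abs_self (z 1 - w 1),
      neg_abs_le (z 1 - w 1)]

theorem infDist_frontier_unitSquare {z : ℝ²} (hz : z ∈ unitSquare) :
    infDist z (frontier unitSquare) = distToSides z := by
  obtain ⟨hz0, hz1⟩ := hz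
  have foot0 {a : ℝ} (ha : a = 0 ∨ a = 1) : infDist z (frontier unitSquare) ≤ |z 0 - a| :=
    dist_foot_vertical z a ▸ infDist_le_dist_of_mem (foot_vertical_mem_frontier ha hz1)
  have foot1 {b : ℝ} (hb : b = 0 ∨ b = 1) : infDist z (frontier unitSquare) ≤ |z 1 - b| :=
    dist_foot_horizontal z b ▸ infDist_le_dist_of_mem (foot_horizontal_mem_frontier hz0 hb)
  refine le_antisymm (le_min (le_min ?_ ?_) (le_min ?_ ?_))
    ((le_infDist ⟨_, foot_vertical_mem_frontier (.inl rfl) hz1⟩).2 fun w hw =>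
      distToSides_le_dist z hw)
  · simpa [abs_of_nonneg hz0.1] using foot0 (.inl rfl)
  · simpa [abs_sub_comm, abs_of_nonneg (sub_nonneg.2 hz0.2)] using foot0 (.inr rfl)
  · simpa [abs_of_nonneg hz1.1] using foot1 (.inl rfl)
  · simpa [abs_sub_comm, abs_of_nonneg (sub_nonneg.2 hz1.2)] using foot1 (.inr rfl)

theorem eq_foot_of_dist_eq_distToSides {z w : ℝ²} (hz : z ∈ unitSquare)
    (hw : w ∈ frontier unitSquare) (h : dist z w = distToSides z) :
    (w 0 = 0 ∧ w 1 = z 1 ∧ z 0 = distToSides z) ∨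
      (w 0 = 1 ∧ w 1 = z 1 ∧ 1 - z 0 = distToSides z) ∨
      (w 1 = 0 ∧ w 0 = z 0 ∧ z 1 = distToSides z) ∨
      (w 1 = 1 ∧ w 0 = z 0 ∧ 1 - z 1 = distToSides z) := by
  obtain ⟨⟨hz00, hz01⟩, hz10, hz11⟩ := hz
  have h0 : |z 0 - w 0| ≤ dist z w := PiLp.dist_apply_le z w 0
  have h1 : |z 1 - w 1| ≤ dist z w := PiLp.dist_apply_le z w 1
  have hd := distToSides_le z
  obtain ⟨-, hside⟩ := mem_frontier_unitSquare.1 hw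
  rcases hside with hs | hs | hs | hs
  · have habs : |z 0 - w 0| = z 0 := by rw [hs, sub_zero, abs_of_nonneg hz00]
    have hw1 := dist_eq_abs_sub_apply_zero_iff.1 (by linarith : dist z w = |z 0 - w 0|)
    exact Or.inl ⟨hs, hw1.symm, by linarith⟩
  · have habs : |z 0 - w 0| = 1 - z 0 := by rw [hs, abs_sub_comm, abs_of_nonneg (by linarith)]
    have hw1 := dist_eq_abs_sub_apply_zero_iff.1 (by linarith : dist z w = |z 0 - w 0|)
    exact Or.inr (Or.inl ⟨hs, hw1.symm, by linarith⟩)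
  · have habs : |z 1 - w 1| = z 1 := by rw [hs, sub_zero, abs_of_nonneg hz10]
    have hw0 := dist_eq_abs_sub_apply_one_iff.1 (by linarith : dist z w = |z 1 - w 1|)
    exact Or.inr (Or.inr (Or.inl ⟨hs, hw0.symm, by linarith⟩))
  · have habs : |z 1 - w 1| = 1 - z 1 := by rw [hs, abs_sub_comm, abs_of_nonneg (by linarith)]
    have hw0 := dist_eq_abs_sub_apply_one_iff.1 (by linarith : dist z w = |z 1 - w 1|)
    exact Or.inr (Or.inr (Or.inr ⟨hs, hw0.symm, by linarith⟩))

theorem apply_one_eq_or_eq_one_sub_of_mem_skeleton {z : ℝ²} (h : z ∈ skeleton unitSquare) :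
    z 1 = z 0 ∨ z 1 = 1 - z 0 := by
  have hz : z ∈ unitSquare := interior_subset (convex_unitSquare.skeleton_subset_interior h)
  obtain ⟨x, x', hx, hx', hne, hzx, hzx'⟩ := h
  rw [infDist_frontier_unitSquare hz] at hzx hzx'
  have hext (h0 : x 0 = x' 0) (h1 : x 1 = x' 1) : False :=
    hne (by ext i; fin_cases i <;> assumption)
  have hd := distToSides_le z
  -- `x` and `x'` are feet on nearest sides: on the same side they coincide, and two different
  -- sides can only both be nearest on a diagonal.
  rcases eq_foot_of_dist_eq_distToSides hz hx hzx with ⟨hx0, hx1, hm⟩ | ⟨hx0, hx1, hm⟩ |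
      ⟨hx1, hx0, hm⟩ | ⟨hx1, hx0, hm⟩ <;>
    rcases eq_foot_of_dist_eq_distToSides hz hx' hzx' with ⟨hx0', hx1', hm'⟩ | ⟨hx0', hx1', hm'⟩ |
      ⟨hx1', hx0', hm'⟩ | ⟨hx1', hx0', hm'⟩ <;>
    first
    | exact (hext (by linarith) (by linarith)).elim
    | exact Or.inl (by linarith)
    | exact Or.inr (by linarith)

theorem exists_abs_sub_eq_min {s : ℝ} (hs : s ∈ Icc (0 : ℝ) 1) :
    ∃ a : ℝ, (a = 0 ∨ a = 1) ∧ |s - a| = min s (1 - s) := by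
  rcases le_total s (1 - s) with h | h
  · exact ⟨0, .inl rfl, by rw [sub_zero, abs_of_nonneg hs.1, min_eq_left h]⟩
  · exact ⟨1, .inr rfl, by rw [abs_sub_comm, abs_of_nonneg (sub_nonneg.2 hs.2), min_eq_right h]⟩

theorem mem_skeleton_unitSquare_of_mem_diagonal {z : ℝ²} (h0 : 0 < z 0) (h1 : z 0 < 1)
    (hdiag : z 1 = z 0 ∨ z 1 = 1 - z 0) : z ∈ skeleton unitSquare := by
  have hz0 : z 0 ∈ Icc (0 : ℝ) 1 := ⟨h0.le, h1.le⟩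
  have hz1 : z 1 ∈ Icc (0 : ℝ) 1 := by
    rcases hdiag with h | h <;> rw [h] <;> constructor <;> linarith
  have hmin : min (z 1) (1 - z 1) = min (z 0) (1 - z 0) := by
    rcases hdiag with h | h <;> rw [h]
    rw [sub_sub_cancel, min_comm]
  have hd : distToSides z = min (z 0) (1 - z 0) := by rw [distToSides, hmin, min_self]
  obtain ⟨a, ha, hza⟩ := exists_abs_sub_eq_min hz0
  obtain ⟨b, hb, hzb⟩ := exists_abs_sub_eq_min hz1
  refine ⟨!₂[a, z 1], !₂[z 0, b], foot_vertical_mem_frontier ha hz1,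
    foot_horizontal_mem_frontier hz0 hb, fun he => ?_, ?_, ?_⟩
  · have : a = z 0 := by simpa using congrArg (· 0) he
    rcases ha with rfl | rfl <;> linarith
  · rw [infDist_frontier_unitSquare ⟨hz0, hz1⟩, dist_foot_vertical, hza, hd]
  · rw [infDist_frontier_unitSquare ⟨hz0, hz1⟩, dist_foot_horizontal, hzb, hd, hmin]

/-- The skeleton of the unit square `K = [0,1] × [0,1] ⊆ ℝ²` (the set of points with a
non-unique nearest point on the boundary `∂K`) equals the union of the two open diagonals
`{(x, x) : 0 < x < 1} ∪ {(x, 1 − x) : 0 < x < 1}`. -/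
theorem skeleton_of_unit_square :
    let K : Set (EuclideanSpace ℝ (Fin 2)) :=
      {z | z 0 ∈ Set.Icc (0 : ℝ) 1 ∧ z 1 ∈ Set.Icc (0 : ℝ) 1}
    {z : EuclideanSpace ℝ (Fin 2) |
        ∃ x x' : EuclideanSpace ℝ (Fin 2), x ∈ frontier K ∧ x' ∈ frontier K ∧ x ≠ x' ∧
          dist z x = infDist z (frontier K) ∧ dist z x' = infDist z (frontier K)}
      = {z : EuclideanSpace ℝ (Fin 2) |
          ∃ t : ℝ, 0 < t ∧ t < 1 ∧
            ((z 0 = t ∧ z 1 = t) ∨ (z 0 = t ∧ z 1 = 1 - t))} := by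
  intro K
  change skeleton unitSquare = _
  ext z
  constructor
  · intro h
    have hz := convex_unitSquare.skeleton_subset_interior h
    rw [interior_unitSquare] at hz
    exact ⟨z 0, hz.1.1, hz.1.2,
      (apply_one_eq_or_eq_one_sub_of_mem_skeleton h).imp (⟨rfl, ·⟩) (⟨rfl, ·⟩)⟩
  · rintro ⟨t, ht0, ht1, ⟨rfl, h⟩ | ⟨rfl, h⟩⟩
    exacts [mem_skeleton_unitSquare_of_mem_diagonal ht0 ht1 (.inl h),
      mem_skeleton_unitSquare_of_mem_diagonal ht0 ht1 (.inr h)]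
end

section
/- Let (X, d) be a pseudometric space, let (S_n) be a sequence of nonempty subsets of X, and let L = {x ∈ X : there exists a sequence (y_n) with y_n ∈ S_n for all n and d(y_n, x) → 0} be the set of limits of sequences chosen from the S_n. If L is nonempty and totally bounded, then sup_{x ∈ L} inf_{y ∈ S_n} d(x, y) → 0 as n → ∞. -/
open Metric Filter Topology

/-- In a pseudometric space, let `S_n` be nonempty subsets and let `L` be the set of all
limits of sequences `(y_n)` with `y_n ∈ S_n`. If `L` is nonempty and totally bounded, then
`sup_{x ∈ L} inf_{y ∈ S_n} d(x, y) → 0`. -/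
theorem sup_infDist_tendsto_zero_of_limit_set_totallyBounded
    {X : Type*} [PseudoMetricSpace X]
    (S : ℕ → Set X) (hS : ∀ n, (S n).Nonempty) :
    let L : Set X := {x | ∃ y : ℕ → X, (∀ n, y n ∈ S n) ∧
      Tendsto (fun n => dist (y n) x) atTop (𝓝 0)}
    L.Nonempty → TotallyBounded L →
      Tendsto (fun n => ⨆ x : L, infDist (x : X) (S n)) atTop (𝓝 0) := by
  intro L hL htb
  have hLne : Nonempty L := hL.to_subtype
  rw [Metric.tendsto_atTop]
  intro ε hε
  -- cover L by finitely many balls of radius ε/3 with centers in L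
  obtain ⟨t, htL, htfin, hcov⟩ := (totallyBounded_iff_subset.mp htb)
    {p : X × X | dist p.1 p.2 < ε/3} (dist_mem_uniformity (by linarith))
  -- for each center, eventually infDist c (S n) < ε/3
  have key : ∀ᶠ n in atTop, ∀ c ∈ t, infDist c (S n) < ε/3 := by
    rw [eventually_all_finite htfin]
    intro c hc
    obtain ⟨y, hy, hyc⟩ := htL hc
    have := (Metric.tendsto_atTop.mp hyc) (ε/3) (by linarith)
    filter_upwards [eventually_atTop.mpr this] with n hn
    calc infDist c (S n) ≤ dist c (y n) := infDist_le_dist_of_mem (hy n)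
      _ = dist (y n) c := dist_comm _ _
      _ < ε/3 := by simpa [Real.dist_eq, abs_of_nonneg dist_nonneg] using hn
  rw [eventually_atTop] at key
  obtain ⟨N, hN⟩ := key
  refine ⟨N, fun n hn => ?_⟩
  have hbound : (⨆ x : L, infDist (x : X) (S n)) ≤ 2*ε/3 := by
    apply ciSup_le
    rintro ⟨x, hx⟩
    show infDist x (S n) ≤ 2*ε/3
    obtain ⟨c, hc, hxc⟩ := by
      have := hcov hx
      simpa using this
    calc infDist x (S n) ≤ infDist c (S n) + dist x c := infDist_le_infDist_add_dist
      _ ≤ ε/3 + ε/3 := le_of_lt (add_lt_add (hN n hn c hc) hxc)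
      _ ≤ 2*ε/3 := by linarith
  have hnonneg : 0 ≤ ⨆ x : L, infDist (x : X) (S n) :=
    Real.iSup_nonneg fun x => infDist_nonneg
  rw [Real.dist_eq, sub_zero, abs_of_nonneg hnonneg]
  linarith
end

section
/- Fix α ∈ [0, π/2), c = (c₁, c₂) ∈ ℝ², and a, b ∈ ℝ. For ε > 0, let E_ε ⊆ ℝ² be the closed ellipse with center εc, semi-axis 1 + εa in the direction (cos α, sin α) and semi-axis 1 + εb in the direction (−sin α, cos α); that is, E_ε = {z ∈ ℝ² : (⟨z − εc, (cos α, sin α)⟩ / (1 + εa))² + (⟨z − εc, (−sin α, cos α)⟩ / (1 + εb))² ≤ 1}. For θ ∈ [0, 2π), let r_ε(θ) = sup{r ≥ 0 : r(cos θ, sin θ) ∈ E_ε} be the radial function of E_ε. Then, as ε → 0⁺, (r_ε(θ) − 1)/ε converges, uniformly in θ ∈ [0, 2π), to f(θ) = c₁ cos θ + c₂ sin θ + a cos²(θ − α) + b sin²(θ − α). -/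
/-!
In coordinates rotated by `α` the centre becomes `ε (k₁, k₂)` and the ellipse is axis-parallel, so
after clearing denominators the point `r (cos φ, sin φ)`, `φ = θ - α`, lies in `E_ε` iff a convex
quadratic `G_ε(r)` is nonpositive. Expanding, `G_ε(1 + ε t) = 2ε (t - f) + ε² R` with `R` a
polynomial, hence bounded on compact sets, uniformly in `φ`. So for fixed `δ > 0` and small `ε`,
`G_ε` is nonpositive at `1 + ε (f - δ)` and positive at `1 + ε (f + δ)`; since the sublevel set
is an interval, `r_ε` lies between these two points.
-/

open Real Filter Topology Set

theorem csSup_mem_Icc_of_ordConnected {α : Type*} [ConditionallyCompleteLinearOrder α]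
    {s : Set α} {a b : α} (hs : s.OrdConnected) (ha : a ∈ s) (hb : b ∉ s) (hab : a ≤ b) :
    sSup s ∈ Icc a b := by
  have hub : ∀ x ∈ s, x ≤ b := fun x hx =>
    le_of_not_gt fun hbx => hb (hs.out ha hx ⟨hab, hbx.le⟩)
  exact ⟨le_csSup ⟨b, hub⟩ ha, csSup_le ⟨a, ha⟩ hub⟩

theorem tendstoUniformlyOn_sub_one_div_of_mem_Icc {ι : Type*} {ρ : ℝ → ι → ℝ} {f : ι → ℝ}
    {s : Set ι}
    (h : ∀ δ > 0, ∀ᶠ ε in 𝓝[>] (0 : ℝ), ∀ θ ∈ s,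
      ρ ε θ ∈ Icc (1 + ε * (f θ - δ)) (1 + ε * (f θ + δ))) :
    TendstoUniformlyOn (fun ε θ => (ρ ε θ - 1) / ε) f (𝓝[>] 0) s := by
  rw [Metric.tendstoUniformlyOn_iff]
  intro δ hδ
  filter_upwards [h (δ / 2) (half_pos hδ), self_mem_nhdsWithin] with ε hρ (hε : 0 < ε) θ hθ
  obtain ⟨hlow, hhigh⟩ := hρ θ hθ
  have hlow' : f θ - δ / 2 ≤ (ρ ε θ - 1) / ε := by rw [le_div_iff₀ hε]; linarith
  have hhigh' : (ρ ε θ - 1) / ε ≤ f θ + δ / 2 := by rw [div_le_iff₀ hε]; linarith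
  rw [Real.dist_eq, abs_sub_lt_iff]
  constructor <;> linarith

theorem eventually_mul_lt_nhdsGT (K : ℝ) {c : ℝ} (hc : 0 < c) :
    ∀ᶠ ε in 𝓝[>] (0 : ℝ), ε * K < c :=
  nhdsWithin_le_nhds <|
    ((continuous_id.mul continuous_const).tendsto' 0 0 (by simp)).eventually_lt_const hc

theorem convexOn_mul_sub_sq (m n : ℝ) : ConvexOn ℝ univ fun r : ℝ => (r * m - n) ^ 2 := by
  refine ⟨convex_univ, fun x _ y _ s t hs ht hst => ?_⟩
  obtain rfl : t = 1 - s := by linarith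
  have hgap : s * (x * m - n) ^ 2 + (1 - s) * (y * m - n) ^ 2
      - ((s * x + (1 - s) * y) * m - n) ^ 2 = s * (1 - s) * ((x - y) * m) ^ 2 := by ring
  simp only [smul_eq_mul]
  linarith [mul_nonneg (mul_nonneg hs ht) (sq_nonneg ((x - y) * m))]

theorem mul_cos_add_mul_sin_eq (c₁ c₂ α θ : ℝ) :
    c₁ * cos θ + c₂ * sin θ
      = (c₁ * cos α + c₂ * sin α) * cos (θ - α) + (c₂ * cos α - c₁ * sin α) * sin (θ - α) := by
  rw [cos_sub, sin_sub]
  linear_combination (-(c₁ * cos θ + c₂ * sin θ)) * sin_sq_add_cos_sq α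

section

variable (a b k₁ k₂ : ℝ)

/-- `(r C, r S)` lies in the axis-parallel ellipse with centre `ε (k₁, k₂)` and semi-axes
`1 + ε a`, `1 + ε b` iff this is `≤ 0` (when both semi-axes are positive). -/
def ellipseQuadratic (ε C S r : ℝ) : ℝ :=
  (1 + ε * b) ^ 2 * (r * C - ε * k₁) ^ 2 + (1 + ε * a) ^ 2 * (r * S - ε * k₂) ^ 2
    - (1 + ε * a) ^ 2 * (1 + ε * b) ^ 2

def ellipseRemainder (ε C S t : ℝ) : ℝ :=
  (1 + ε * b) ^ 2 * (t * C - k₁) ^ 2 + (1 + ε * a) ^ 2 * (t * S - k₂) ^ 2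
    + 2 * (b * (2 + ε * b) * C * (t * C - k₁) + a * (2 + ε * a) * S * (t * S - k₂))
    - b ^ 2 * S ^ 2 - a ^ 2 * C ^ 2 - a * b * (2 + ε * a) * (2 + ε * b)

theorem ellipseQuadratic_one_add_mul {C S : ℝ} (hCS : C ^ 2 + S ^ 2 = 1) (ε t : ℝ) :
    ellipseQuadratic a b k₁ k₂ ε C S (1 + ε * t)
      = 2 * ε * (t - (k₁ * C + k₂ * S + a * C ^ 2 + b * S ^ 2))
        + ε ^ 2 * ellipseRemainder a b k₁ k₂ ε C S t := by
  unfold ellipseQuadratic ellipseRemainder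
  linear_combination ((1 + ε * a) ^ 2 + (1 + ε * b) ^ 2 - 1 + 2 * ε * t) * hCS

theorem exists_abs_ellipseRemainder_le (T : ℝ) :
    ∃ M, ∀ ε t C S : ℝ, |ε| ≤ 1 → |t| ≤ T → C ^ 2 + S ^ 2 = 1 →
      |ellipseRemainder a b k₁ k₂ ε C S t| ≤ M := by
  obtain ⟨M, hM⟩ := (isCompact_closedBall (0 : ℝ × ℝ × ℝ × ℝ) (max 1 T)).exists_bound_of_continuousOn
    (f := fun x => ellipseRemainder a b k₁ k₂ x.1 x.2.2.1 x.2.2.2 x.2.1)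
    (by unfold ellipseRemainder; fun_prop)
  refine ⟨M, fun ε t C S hε ht hCS => ?_⟩
  have hC : |C| ≤ 1 := (sq_le_one_iff_abs_le_one C).1 (by linarith [sq_nonneg S])
  have hS : |S| ≤ 1 := (sq_le_one_iff_abs_le_one S).1 (by linarith [sq_nonneg C])
  have hmem : (ε, t, C, S) ∈ Metric.closedBall (0 : ℝ × ℝ × ℝ × ℝ) (max 1 T) := by
    simp only [mem_closedBall_zero_iff, Prod.norm_def, Real.norm_eq_abs]
    exact max_le (le_max_of_le_left hε) <| max_le (le_max_of_le_right ht) <|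
      max_le (le_max_of_le_left hC) (le_max_of_le_left hS)
  simpa using hM _ hmem

theorem abs_first_order_coeff_le {C S : ℝ} (hCS : C ^ 2 + S ^ 2 = 1) :
    |k₁ * C + k₂ * S + a * C ^ 2 + b * S ^ 2| ≤ |k₁| + |k₂| + |a| + |b| := by
  have hC2 : C ^ 2 ≤ 1 := by linarith [sq_nonneg S]
  have hS2 : S ^ 2 ≤ 1 := by linarith [sq_nonneg C]
  have hC : |k₁ * C| ≤ |k₁| := by
    rw [abs_mul]; exact mul_le_of_le_one_right (abs_nonneg _) ((sq_le_one_iff_abs_le_one C).1 hC2)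
  have hS : |k₂ * S| ≤ |k₂| := by
    rw [abs_mul]; exact mul_le_of_le_one_right (abs_nonneg _) ((sq_le_one_iff_abs_le_one S).1 hS2)
  have hC2' : |a * C ^ 2| ≤ |a| := by
    rw [abs_mul, abs_sq]; exact mul_le_of_le_one_right (abs_nonneg _) hC2
  have hS2' : |b * S ^ 2| ≤ |b| := by
    rw [abs_mul, abs_sq]; exact mul_le_of_le_one_right (abs_nonneg _) hS2
  calc |k₁ * C + k₂ * S + a * C ^ 2 + b * S ^ 2|
      ≤ |k₁ * C| + |k₂ * S| + |a * C ^ 2| + |b * S ^ 2| :=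
        (abs_add_le _ _).trans <| add_le_add_left
          ((abs_add_le _ _).trans <| add_le_add_left (abs_add_le _ _) _) _
    _ ≤ |k₁| + |k₂| + |a| + |b| := by gcongr

theorem convexOn_ellipseQuadratic (ε C S : ℝ) :
    ConvexOn ℝ univ (ellipseQuadratic a b k₁ k₂ ε C S) :=
  (((convexOn_mul_sub_sq C (ε * k₁)).smul (sq_nonneg (1 + ε * b))).add
    ((convexOn_mul_sub_sq S (ε * k₂)).smul (sq_nonneg (1 + ε * a)))).add_const _

theorem ordConnected_ellipseQuadratic_nonpos (ε C S : ℝ) :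
    {r | 0 ≤ r ∧ ellipseQuadratic a b k₁ k₂ ε C S r ≤ 0}.OrdConnected :=
  (((convexOn_ellipseQuadratic a b k₁ k₂ ε C S).subset (subset_univ _) (convex_Ici 0)).convex_le
    0).ordConnected

theorem sSup_ellipseQuadratic_nonpos_mem_Icc {ε δ T M C S : ℝ} (hε : 0 < ε) (hδ : 0 < δ)
    (hCS : C ^ 2 + S ^ 2 = 1) (hT : |k₁| + |k₂| + |a| + |b| + δ ≤ T) (hεT : ε * T ≤ 1)
    (hM : ∀ t, |t| ≤ T → |ellipseRemainder a b k₁ k₂ ε C S t| ≤ M) (hεM : ε * M < δ) :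
    sSup {r | 0 ≤ r ∧ ellipseQuadratic a b k₁ k₂ ε C S r ≤ 0} ∈
      Icc (1 + ε * (k₁ * C + k₂ * S + a * C ^ 2 + b * S ^ 2 - δ))
        (1 + ε * (k₁ * C + k₂ * S + a * C ^ 2 + b * S ^ 2 + δ)) := by
  set f := k₁ * C + k₂ * S + a * C ^ 2 + b * S ^ 2
  have hf := abs_le.mp (abs_first_order_coeff_le a b k₁ k₂ hCS)
  have hlowT : |f - δ| ≤ T := abs_le.mpr ⟨by linarith, by linarith⟩
  have hhighT : |f + δ| ≤ T := abs_le.mpr ⟨by linarith, by linarith⟩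
  have hεεM : ε ^ 2 * M < ε * δ := by nlinarith
  have hlow : ellipseQuadratic a b k₁ k₂ ε C S (1 + ε * (f - δ)) ≤ 0 := by
    rw [ellipseQuadratic_one_add_mul a b k₁ k₂ hCS]
    nlinarith [mul_le_mul_of_nonneg_left (abs_le.mp (hM _ hlowT)).2 (sq_nonneg ε)]
  have hhigh : 0 < ellipseQuadratic a b k₁ k₂ ε C S (1 + ε * (f + δ)) := by
    rw [ellipseQuadratic_one_add_mul a b k₁ k₂ hCS]
    nlinarith [mul_le_mul_of_nonneg_left (abs_le.mp (hM _ hhighT)).1 (sq_nonneg ε)]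
  refine csSup_mem_Icc_of_ordConnected (ordConnected_ellipseQuadratic_nonpos a b k₁ k₂ ε C S)
    ⟨?_, hlow⟩ (fun h => h.2.not_gt hhigh) (by nlinarith)
  nlinarith [mul_le_mul_of_nonneg_left (abs_le.mp hlowT).1 hε.le]

end

theorem ellipse_mem_iff_ellipseQuadratic_nonpos {α c₁ c₂ a b ε : ℝ} (hp : 0 < 1 + ε * a)
    (hq : 0 < 1 + ε * b) (r θ : ℝ) :
    (((r * cos θ - ε * c₁) * cos α + (r * sin θ - ε * c₂) * sin α) / (1 + ε * a)) ^ 2 +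
        (((r * cos θ - ε * c₁) * (-sin α) + (r * sin θ - ε * c₂) * cos α) / (1 + ε * b)) ^ 2 ≤ 1
      ↔ ellipseQuadratic a b (c₁ * cos α + c₂ * sin α) (c₂ * cos α - c₁ * sin α) ε
          (cos (θ - α)) (sin (θ - α)) r ≤ 0 := by
  rw [div_pow, div_pow, div_add_div _ _ (by positivity) (by positivity),
    div_le_one (by positivity), ← sub_nonpos]
  unfold ellipseQuadratic
  rw [cos_sub, sin_sub]
  ring_nf

theorem ellipse_radial_function_first_order_expansion_general
    (α : ℝ) (c₁ c₂ a b : ℝ) :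
    let inE : ℝ → ℝ → ℝ → Prop := fun ε x y =>
      (((x - ε * c₁) * Real.cos α + (y - ε * c₂) * Real.sin α) / (1 + ε * a)) ^ 2 +
        (((x - ε * c₁) * (-Real.sin α) + (y - ε * c₂) * Real.cos α) / (1 + ε * b)) ^ 2 ≤ 1
    let rε : ℝ → ℝ → ℝ := fun ε θ =>
      sSup {r : ℝ | 0 ≤ r ∧ inE ε (r * Real.cos θ) (r * Real.sin θ)}
    TendstoUniformlyOn (fun ε θ => (rε ε θ - 1) / ε)
      (fun θ => c₁ * Real.cos θ + c₂ * Real.sin θ +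
        a * Real.cos (θ - α) ^ 2 + b * Real.sin (θ - α) ^ 2)
      (𝓝[>] (0 : ℝ)) (Set.Ico 0 (2 * π)) := by
  intro inE rε
  set k₁ := c₁ * cos α + c₂ * sin α
  set k₂ := c₂ * cos α - c₁ * sin α
  refine tendstoUniformlyOn_sub_one_div_of_mem_Icc fun δ hδ => ?_
  set T := |k₁| + |k₂| + |a| + |b| + δ
  obtain ⟨M, hM⟩ := exists_abs_ellipseRemainder_le a b k₁ k₂ T
  filter_upwards [self_mem_nhdsWithin, eventually_mul_lt_nhdsGT 1 one_pos,
    eventually_mul_lt_nhdsGT |a| one_pos, eventually_mul_lt_nhdsGT |b| one_pos,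
    eventually_mul_lt_nhdsGT T one_pos, eventually_mul_lt_nhdsGT M hδ]
    with ε (hε : 0 < ε) hε1 hεa hεb hεT hεM θ _
  have hp : 0 < 1 + ε * a := by nlinarith [neg_abs_le a]
  have hq : 0 < 1 + ε * b := by nlinarith [neg_abs_le b]
  have hset : {r | 0 ≤ r ∧ inE ε (r * cos θ) (r * sin θ)}
      = {r | 0 ≤ r ∧ ellipseQuadratic a b k₁ k₂ ε (cos (θ - α)) (sin (θ - α)) r ≤ 0} :=
    Set.ext fun r => and_congr_right fun _ => ellipse_mem_iff_ellipseQuadratic_nonpos hp hq r θ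
  have hε' : |ε| ≤ 1 := by rw [abs_of_pos hε]; linarith
  simp only [rε, hset, mul_cos_add_mul_sin_eq c₁ c₂ α θ]
  exact sSup_ellipseQuadratic_nonpos_mem_Icc a b k₁ k₂ hε hδ (cos_sq_add_sin_sq _) le_rfl hεT.le
    (fun t ht => hM ε t _ _ hε' ht (cos_sq_add_sin_sq _)) hεM

/-- First-order expansion of the radial function of a perturbed ellipse. For
`E_ε = {z ∈ ℝ² : (⟨z − εc, (cos α, sin α)⟩/(1+εa))² + (⟨z − εc, (−sin α, cos α)⟩/(1+εb))² ≤ 1}`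
with radial function `r_ε(θ) = sup{r ≥ 0 : r(cos θ, sin θ) ∈ E_ε}`, one has
`(r_ε(θ) − 1)/ε → c₁ cos θ + c₂ sin θ + a cos²(θ−α) + b sin²(θ−α)` as `ε → 0⁺`,
uniformly in `θ ∈ [0, 2π)`. -/
theorem ellipse_radial_function_first_order_expansion
    (α : ℝ) (hα : α ∈ Set.Ico (0 : ℝ) (π / 2)) (c₁ c₂ a b : ℝ) :
    let inE : ℝ → ℝ → ℝ → Prop := fun ε x y =>
      (((x - ε * c₁) * Real.cos α + (y - ε * c₂) * Real.sin α) / (1 + ε * a)) ^ 2 +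
        (((x - ε * c₁) * (-Real.sin α) + (y - ε * c₂) * Real.cos α) / (1 + ε * b)) ^ 2 ≤ 1
    let rε : ℝ → ℝ → ℝ := fun ε θ =>
      sSup {r : ℝ | 0 ≤ r ∧ inE ε (r * Real.cos θ) (r * Real.sin θ)}
    TendstoUniformlyOn (fun ε θ => (rε ε θ - 1) / ε)
      (fun θ => c₁ * Real.cos θ + c₂ * Real.sin θ +
        a * Real.cos (θ - α) ^ 2 + b * Real.sin (θ - α) ^ 2)
      (𝓝[>] (0 : ℝ)) (Set.Ico 0 (2 * π)) :=
  ellipse_radial_function_first_order_expansion_general α c₁ c₂ a b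
end
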